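/- Let D be a DAG and S a set of nodes with a,b,v pairwise distinct nodes not in S such that a and v are d-separated given S. Suppose p is a d-connecting path from a to b given S and q is a d-connecting path from b to v given S, with b ∉ S. Then b is a collider on the concatenation of p and q, i.e., the last edge of p points into b and the first edge of q points into b, and moreover b is not an ancestor of any node of S. -/

import Mathlib

/-- A mixed graph: directed edges `dir` and bidirected edges `bi`. -/
structure MixedGraph (V : Type) where
  dir : V → V → Prop
  bi : V → V → Prop

namespace MixedGraph

variable {V : Type} (G : MixedGraph V)

/-- symmetric view of bidirected adjacency -/
def biAdj (a b : V) : Prop := G.bi a b ∨ G.bi b a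

/-- `step G u v hu hv` : an edge between `u` and `v` with arrowhead-at-`u` = `hu`
and arrowhead-at-`v` = `hv`. -/
def step (u v : V) (hu hv : Bool) : Prop :=
  (hu = false ∧ hv = true ∧ G.dir u v) ∨
  (hu = true ∧ hv = false ∧ G.dir v u) ∨
  (hu = true ∧ hv = true ∧ G.biAdj u v)

/-- Walks in a mixed graph, recording the arrowhead marks of each traversed edge. -/
inductive Walk : V → V → Type _
  | nil (v : V) : Walk v v
  | cons {u v w : V} (hu hv : Bool) (h : G.step u v hu hv) (p : Walk v w) : Walk u w

variable {G}

def Walk.support : ∀ {a b : V}, G.Walk a b → List V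
  | _, _, .nil v => [v]
  | _, _, .cons (u := u) _ _ _ p => u :: p.support

/-- List of internal vertices together with the two arrowhead marks adjacent to them
(incoming mark, outgoing mark): a vertex is a collider iff both are `true`. -/
def Walk.marksInternal : ∀ {a b : V}, G.Walk a b → List (V × Bool × Bool)
  | _, _, .nil _ => []
  | _, _, .cons _ hv _ q =>
    match q with
    | .nil _ => []
    | .cons (u := m) hu' _ _ _ => (m, hv, hu') :: q.marksInternal

/-- The arrowhead mark at the first vertex of a walk (if nonempty). -/
def Walk.firstHead : ∀ {a b : V}, G.Walk a b → Option Bool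
  | _, _, .nil _ => none
  | _, _, .cons hu _ _ _ => some hu

/-- The arrowhead mark at the last vertex of a walk (if nonempty). -/
def Walk.lastHead : ∀ {a b : V}, G.Walk a b → Option Bool
  | _, _, .nil _ => none
  | _, _, .cons _ hv _ q =>
    match q with
    | .nil _ => some hv
    | .cons _ _ _ _ => q.lastHead

variable (G)

/-- Ancestorship in a mixed graph: directed edges only (reflexive). -/
def Anc (a b : V) : Prop := Relation.ReflTransGen G.dir a b

variable {G}

/-- A walk is d-connecting given `c` iff every collider on it is an ancestor of some
node of `c` and every non-collider is not in `c`. -/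
def Walk.DConnecting (c : Set V) {a b : V} (w : G.Walk a b) : Prop :=
  ∀ m ∈ w.marksInternal,
    ((m.2.1 = true ∧ m.2.2 = true) → ∃ x ∈ c, G.Anc m.1 x) ∧
    (¬ (m.2.1 = true ∧ m.2.2 = true) → m.1 ∉ c)

/-- A walk is active given `c` iff every collider on it is in `c` and every
non-collider is not in `c`. -/
def Walk.Active (c : Set V) {a b : V} (w : G.Walk a b) : Prop :=
  ∀ m ∈ w.marksInternal,
    ((m.2.1 = true ∧ m.2.2 = true) → m.1 ∈ c) ∧
    (¬ (m.2.1 = true ∧ m.2.2 = true) → m.1 ∉ c)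

/-- A path is a walk without repeated vertices. -/
def Walk.IsPath {a b : V} (w : G.Walk a b) : Prop := w.support.Nodup

variable (G)

/-- d-connection: existence of a d-connecting path. -/
def DConn (c : Set V) (a b : V) : Prop :=
  ∃ w : G.Walk a b, w.IsPath ∧ w.DConnecting c

/-- d-separation (m-separation in mixed graphs). -/
def DSep (c : Set V) (a b : V) : Prop := ¬ G.DConn c a b

/-- Adjacency in a mixed graph. -/
def Adj (a b : V) : Prop := G.dir a b ∨ G.dir b a ∨ G.biAdj a b

end MixedGraph

/-- View a directed graph as a mixed graph with no bidirected edges. -/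
def ofDAG {V : Type} (E : V → V → Prop) : MixedGraph V := ⟨E, fun _ _ => False⟩

/-- Acyclicity of a directed graph. -/
def Acyclic {V : Type} (E : V → V → Prop) : Prop := ∀ a, ¬ Relation.TransGen E a a

/-- `a, b` are `k`-covered in `E`: no conditioning set of size at most `k` d-separates them. -/
def KCovered {V : Type} (E : V → V → Prop) (k : ℕ) (a b : V) : Prop :=
  ∀ c : Finset V, c.card ≤ k → ¬ (ofDAG E).DSep (↑c) a b

/-- The `k`-closure of a DAG: every `k`-covered pair is adjacent, oriented by
ancestrality in `E`, bidirected when neither endpoint is an ancestor of the other. -/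
def kClosure {V : Type} (E : V → V → Prop) (k : ℕ) : MixedGraph V where
  dir a b := KCovered E k a b ∧ Relation.TransGen E a b
  bi a b := KCovered E k a b ∧ KCovered E k b a ∧
    ¬ Relation.ReflTransGen E a b ∧ ¬ Relation.ReflTransGen E b a

/-- Maximal ancestral graph: no directed cycles, no almost directed cycles,
and every non-adjacent pair of distinct nodes is d-separable. -/
def IsMAG {V : Type} (G : MixedGraph V) : Prop :=
  (∀ a, ¬ Relation.TransGen G.dir a a) ∧
  (∀ a b, Relation.TransGen G.dir a b → ¬ G.biAdj a b) ∧
  (∀ a b, a ≠ b → ¬ G.Adj a b → ∃ S : Set V, G.DSep S a b)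

/-- k-Markov equivalence of two directed graphs. -/
def kMarkovEquiv {V : Type} (E₁ E₂ : V → V → Prop) (k : ℕ) : Prop :=
  ∀ a b, ∀ c : Finset V, c.card ≤ k →
    ((ofDAG E₁).DSep (↑c) a b ↔ (ofDAG E₂).DSep (↑c) a b)

/-- Markov equivalence of two mixed graphs. -/
def MarkovEquiv {V : Type} (G₁ G₂ : MixedGraph V) : Prop :=
  ∀ a b, ∀ c : Set V, G₁.DSep c a b ↔ G₂.DSep c a b

/-! ### Auxiliary machinery for the proof -/

namespace MixedGraph

variable {V : Type} {G : MixedGraph V}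

/-- Length of a walk. -/
def Walk.length : ∀ {a b : V}, G.Walk a b → ℕ
  | _, _, .nil _ => 0
  | _, _, .cons _ _ _ p => p.length + 1

/-- Concatenation of walks. -/
def Walk.append : ∀ {a b c : V}, G.Walk a b → G.Walk b c → G.Walk a c
  | _, _, _, .nil _, q => q
  | _, _, _, .cons hu hv h p, q => .cons hu hv h (p.append q)

/-- Marks of all vertices except the last one, given an artificial incoming
mark `h` at the first vertex. -/
def Walk.marksAux : ∀ {a b : V}, G.Walk a b → Bool → List (V × Bool × Bool)
  | a, _, .cons hu hv _ q, h => (a, h, hu) :: q.marksAux hv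
  | _, _, .nil _, _ => []

/-- The last arrowhead mark of a walk, defaulting to `h` for the empty walk. -/
def Walk.lastH : ∀ {a b : V}, G.Walk a b → Bool → Bool
  | _, _, .nil _, h => h
  | _, _, .cons _ hv _ q, _ => q.lastH hv

theorem Walk.marksInternal_cons : ∀ {v b : V} (q : G.Walk v b) {u : V} (hu hv : Bool)
    (h : G.step u v hu hv), (Walk.cons hu hv h q).marksInternal = q.marksAux hv
  | _, _, .nil _, _, _, _, _ => rfl
  | _, _, .cons hu' hv' h' q', u, hu, hv, h => by
      show (_, hv, hu') :: (Walk.cons hu' hv' h' q').marksInternal = _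
      rw [Walk.marksInternal_cons q' hu' hv' h']
      rfl

theorem Walk.lastHead_cons : ∀ {v b : V} (q : G.Walk v b) {u : V} (hu hv : Bool)
    (h : G.step u v hu hv), (Walk.cons hu hv h q).lastHead = some (q.lastH hv)
  | _, _, .nil _, _, _, _, _ => rfl
  | _, _, .cons hu' hv' h' q', u, hu, hv, h => by
      show (Walk.cons hu' hv' h' q').lastHead = _
      rw [Walk.lastHead_cons q' hu' hv' h']
      rfl

theorem Walk.marksAux_append : ∀ {a b c : V} (p : G.Walk a b) (q : G.Walk b c) (h : Bool),
    (p.append q).marksAux h = p.marksAux h ++ q.marksAux (p.lastH h)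
  | _, _, _, .nil _, q, h => rfl
  | _, _, _, .cons hu hv e p', q, h => by
      show (_, h, hu) :: (p'.append q).marksAux hv = _
      rw [Walk.marksAux_append p' q hv]
      rfl

theorem Walk.length_append : ∀ {a b c : V} (p : G.Walk a b) (q : G.Walk b c),
    (p.append q).length = p.length + q.length
  | _, _, _, .nil _, q => (Nat.zero_add _).symm
  | _, _, _, .cons hu hv e p', q => by
      show (p'.append q).length + 1 = (p'.length + 1) + q.length
      rw [Walk.length_append p' q]; omega

theorem Walk.mem_marksAux_of_mem_marksInternal {a b : V} {w : G.Walk a b}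
    {m : V × Bool × Bool} (hm : m ∈ w.marksInternal) (h : Bool) : m ∈ w.marksAux h := by
  cases w with
  | nil => exact absurd hm (by simp [Walk.marksInternal])
  | cons hu hv e q =>
      rw [Walk.marksInternal_cons] at hm
      exact List.mem_cons_of_mem _ hm

/-- membership in marks of an append: left piece -/
theorem Walk.mem_append_left {a b c : V} {p : G.Walk a b} (q : G.Walk b c)
    {m : V × Bool × Bool} (hm : m ∈ p.marksInternal) : m ∈ (p.append q).marksInternal := by
  cases p with
  | nil => exact absurd hm (by simp [Walk.marksInternal])
  | cons hu hv e p' =>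
      show m ∈ (Walk.cons hu hv e (p'.append q)).marksInternal
      rw [Walk.marksInternal_cons, Walk.marksAux_append]
      rw [Walk.marksInternal_cons] at hm
      exact List.mem_append_left _ hm

/-- membership in marks of an append: right piece -/
theorem Walk.mem_append_right {a b c : V} (p : G.Walk a b) {q : G.Walk b c}
    {m : V × Bool × Bool} (hm : m ∈ q.marksInternal) : m ∈ (p.append q).marksInternal := by
  cases p with
  | nil => exact hm
  | cons hu hv e p' =>
      show m ∈ (Walk.cons hu hv e (p'.append q)).marksInternal
      rw [Walk.marksInternal_cons, Walk.marksAux_append]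
      exact List.mem_append_right _ (q.mem_marksAux_of_mem_marksInternal hm _)

/-- membership in marks of an append: junction -/
theorem Walk.mem_append_junction {a b c : V} {p : G.Walk a b} {q : G.Walk b c}
    {hL h1 : Bool} (hp : p.lastHead = some hL) (hq : q.firstHead = some h1) :
    (b, hL, h1) ∈ (p.append q).marksInternal := by
  cases p with
  | nil => exact absurd hp (by simp [Walk.lastHead])
  | cons hu hv e p' =>
      rw [Walk.lastHead_cons] at hp
      cases q with
      | nil => exact absurd hq (by simp [Walk.firstHead])
      | cons huq hvq eq' q' =>
          show (b, hL, h1) ∈ (Walk.cons hu hv e (p'.append _)).marksInternal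
          rw [Walk.marksInternal_cons, Walk.marksAux_append]
          refine List.mem_append_right _ ?_
          have h1' : h1 = huq := by simpa [Walk.firstHead] using hq.symm
          have hL' : hL = p'.lastH hv := by simpa using hp.symm
          subst h1' hL'
          exact List.mem_cons_self

/-- decomposition of membership in marks of an append -/
theorem Walk.mem_append_elim {a b c : V} {p : G.Walk a b} {q : G.Walk b c}
    {m : V × Bool × Bool} (hm : m ∈ (p.append q).marksInternal) :
    m ∈ p.marksInternal ∨ m ∈ q.marksInternal ∨
      ∃ hL h1 : Bool, p.lastHead = some hL ∧ q.firstHead = some h1 ∧ m = (b, hL, h1) := by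
  cases p with
  | nil => exact Or.inr (Or.inl hm)
  | cons hu hv e p' =>
      rw [show (Walk.cons hu hv e p').append q = Walk.cons hu hv e (p'.append q) from rfl,
        Walk.marksInternal_cons, Walk.marksAux_append] at hm
      rcases List.mem_append.1 hm with h | h
      · exact Or.inl (by rw [Walk.marksInternal_cons]; exact h)
      · cases q with
        | nil => exact absurd h (by simp [Walk.marksAux])
        | cons huq hvq eq' q' =>
            rcases List.mem_cons.1 h with h | h
            · exact Or.inr (Or.inr ⟨_, _, Walk.lastHead_cons _ _ _ _, rfl, h⟩)
            · exact Or.inr (Or.inl (by rw [Walk.marksInternal_cons]; exact h))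

/-- split a walk at a vertex occurring in its support -/
theorem Walk.mem_split {b x : V} : ∀ {a : V} (w : G.Walk a b), x ∈ w.support →
    ∃ (w1 : G.Walk a x) (w2 : G.Walk x b), w = w1.append w2 := by
  intro a w
  induction w with
  | nil v =>
      intro hx
      have hxv : x = v := by simpa [Walk.support] using hx
      subst hxv
      exact ⟨.nil _, .nil _, rfl⟩
  | cons hu hv e q ih =>
      intro hx
      rcases List.mem_cons.1 hx with h | h
      · subst h
        exact ⟨.nil x, .cons hu hv e q, rfl⟩
      · obtain ⟨q1, q2, heq⟩ := ih h
        exact ⟨.cons hu hv e q1, q2, by rw [heq]; rfl⟩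

/-- split a walk at a duplicated vertex: the vertex occurs, and occurs again later -/
theorem Walk.dup_split {b x : V} : ∀ {a : V} (w : G.Walk a b), List.Duplicate x w.support →
    ∃ (w1 : G.Walk a x) (y : V) (hu hv : Bool) (e : G.step x y hu hv) (w3 : G.Walk y b),
      w = w1.append (.cons hu hv e w3) ∧ x ∈ w3.support := by
  intro a w
  induction w with
  | nil v =>
      intro hx
      have := (List.duplicate_iff_sublist.1 hx).length_le
      simp [Walk.support] at this
  | cons hu hv e q ih =>
      intro hx
      rcases List.duplicate_cons_iff.1 hx with ⟨rfl, hxq⟩ | hdup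
      · exact ⟨.nil _, _, hu, hv, e, q, rfl, hxq⟩
      · obtain ⟨q1, y, hu', hv', e', q3, heq, hx3⟩ := ih hdup
        exact ⟨.cons hu hv e q1, y, hu', hv', e', q3, by rw [heq]; rfl, hx3⟩

end MixedGraph

section DAG

variable {V : Type} {E : V → V → Prop} {S : Set V}

open MixedGraph

theorem ofDAG_step {u v : V} {hu hv : Bool} (h : (ofDAG E).step u v hu hv) :
    (hu = false ∧ hv = true ∧ E u v) ∨ (hu = true ∧ hv = false ∧ E v u) := by
  rcases h with h | h | h
  · exact Or.inl h
  · exact Or.inr h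
  · rcases h.2.2 with h' | h' <;> exact absurd h' (by simp [ofDAG])

theorem dirReach : ∀ {y z : V} (w : (ofDAG E).Walk y z),
    (∀ m ∈ w.marksAux true, (m.2.1 = true ∧ m.2.2 = true) →
      ∃ s ∈ S, Relation.ReflTransGen E m.1 s) →
    (∃ s ∈ S, Relation.ReflTransGen E y s) ∨ Relation.ReflTransGen E y z := by
  intro y z w
  induction w with
  | nil v => exact fun _ => Or.inr .refl
  | cons hu hv e q ih =>
      intro H
      by_cases hhu : hu = true
      · exact Or.inl (H _ (List.mem_cons_self) ⟨rfl, hhu⟩)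
      · have hu0 : hu = false := by simpa using hhu
        rcases ofDAG_step e with ⟨_, hv1, hEe⟩ | ⟨h1, _, _⟩
        · subst hv1
          rcases ih (fun m hm => H m (List.mem_cons_of_mem _ hm)) with ⟨s, hs, hr⟩ | hr
          · exact Or.inl ⟨s, hs, hr.head hEe⟩
          · exact Or.inr (hr.head hEe)
        · exact absurd h1 (by simp [hu0])

theorem splice (hE : Acyclic E) {a x y v : V} (w1 : (ofDAG E).Walk a x)
    (hu hv : Bool) (e : (ofDAG E).step x y hu hv) (t : (ofDAG E).Walk y x)
    (w4 : (ofDAG E).Walk x v)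
    (hw : (w1.append (.cons hu hv e (t.append w4))).DConnecting S) :
    (w1.append w4).DConnecting S := by
  have hxy : x ≠ y := by
    rintro rfl
    rcases ofDAG_step e with ⟨_, _, h⟩ | ⟨_, _, h⟩ <;> exact hE x (Relation.TransGen.single h)
  -- the middle walk
  have A2' : ∀ m ∈ (t.append w4).marksAux hv, ∀ mm ∈ [m],
      ((m.2.1 = true ∧ m.2.2 = true) → ∃ s ∈ S, (ofDAG E).Anc m.1 s) ∧
      (¬(m.2.1 = true ∧ m.2.2 = true) → m.1 ∉ S) := by
    intro m hm mm _
    exact hw m (Walk.mem_append_right w1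
      (by rw [Walk.marksInternal_cons]; exact hm))
  have A2 : ∀ m ∈ (t.append w4).marksAux hv,
      ((m.2.1 = true ∧ m.2.2 = true) → ∃ s ∈ S, (ofDAG E).Anc m.1 s) ∧
      (¬(m.2.1 = true ∧ m.2.2 = true) → m.1 ∉ S) := fun m hm => A2' m hm m (by simp)
  intro m hm
  rcases Walk.mem_append_elim hm with h | h | ⟨hL, h4, hLe, h4e, rfl⟩
  · exact hw m (Walk.mem_append_left _ h)
  · refine hw m (Walk.mem_append_right w1 ?_)
    rw [Walk.marksInternal_cons, Walk.marksAux_append]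
    exact List.mem_append_right _ (Walk.mem_marksAux_of_mem_marksInternal h _)
  · -- junction pair (x, hL, h4)
    -- first occurrence of x: pair (x, hL, hu) in w
    have pair1 := hw (x, hL, hu) (Walk.mem_append_junction hLe rfl)
    -- t is nonempty
    cases t with
    | nil => exact absurd rfl hxy
    | cons hu3 hv3 e3 t' =>
        set t : (ofDAG E).Walk y x := Walk.cons hu3 hv3 e3 t' with ht
        have h2e : t.lastHead = some (t'.lastH hv3) := Walk.lastHead_cons _ _ _ _
        set h2 : Bool := t'.lastH hv3 with hh2
        have pair2 := A2 (x, h2, h4)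
          (Walk.mem_marksAux_of_mem_marksInternal (Walk.mem_append_junction h2e h4e) hv)
        constructor
        · rintro ⟨hL1, h41⟩
          by_cases hhu : hu = true
          · exact pair1.1 ⟨hL1, hhu⟩
          by_cases hh2t : h2 = true
          · exact pair2.1 ⟨hh2t, h41⟩
          -- hu = false, h2 = false : loop argument
          have hu0 : hu = false := by simpa using hhu
          rcases ofDAG_step e with ⟨_, hv1, hExy⟩ | ⟨hc, _, _⟩
          · subst hv1
            have Ht : ∀ m ∈ t.marksAux true, (m.2.1 = true ∧ m.2.2 = true) →
                ∃ s ∈ S, Relation.ReflTransGen E m.1 s := by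
              intro m hm hcol
              refine (A2 m ?_).1 hcol
              rw [Walk.marksAux_append]
              exact List.mem_append_left _ hm
            rcases dirReach t Ht with ⟨s, hs, hr⟩ | hr
            · exact ⟨s, hs, hr.head hExy⟩
            · exact absurd (Relation.TransGen.head' hExy hr) (hE x)
          · exact absurd hc (by simp [hu0])
        · intro hnc
          by_cases hhL : hL = true
          · have hh4 : h4 = false := by
              rcases Bool.eq_false_or_eq_true h4 with h | h
              · exact absurd ⟨hhL, h⟩ hnc
              · exact h
            exact pair2.2 (by simp [hh4])
          · have hhL0 : hL = false := by simpa using hhL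
            exact pair1.2 (by simp [hhL0])

theorem toPath : ∀ (n : ℕ) {a v : V} (w : (ofDAG E).Walk a v) (_ : w.length ≤ n)
    (_ : w.DConnecting S) (hE : Acyclic E),
    ∃ p : (ofDAG E).Walk a v, p.IsPath ∧ p.DConnecting S := by
  intro n
  induction n with
  | zero =>
      intro a v w hl hw hE
      cases w with
      | nil => exact ⟨.nil _, by simp [Walk.IsPath, Walk.support], hw⟩
      | cons hu hv e q => exact absurd hl (by simp [Walk.length])
  | succ n ih =>
      intro a v w hl hw hE
      by_cases hnd : w.support.Nodup
      · exact ⟨w, hnd, hw⟩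
      · obtain ⟨x, hx⟩ := List.exists_duplicate_iff_not_nodup.2 hnd
        obtain ⟨w1, y, hu, hv, e, w3, heq, hx3⟩ := Walk.dup_split w hx
        obtain ⟨t, w4, heq3⟩ := Walk.mem_split w3 hx3
        subst heq3
        subst heq
        have l1 : (w1.append w4).length = w1.length + w4.length := Walk.length_append _ _
        have l2 : (w1.append (Walk.cons hu hv e (t.append w4))).length
            = w1.length + ((t.append w4).length + 1) := by
          rw [Walk.length_append]; rfl
        have l3 : (t.append w4).length = t.length + w4.length := Walk.length_append _ _
        exact ih (w1.append w4) (by omega) (splice hE w1 hu hv e t w4 hw) hE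

end DAG

/-- if `a` and `v` are d-separated given `S`, `p` is a d-connecting path
from `a` to `b` given `S`, `q` is a d-connecting path from `b` to `v` given `S`, and
`a,b,v ∉ S` are pairwise distinct, then `b` is a collider on the concatenation of `p`
and `q` (arrowhead at `b` from both sides) and `b` is not an ancestor of any node
of `S`. -/
theorem middle_node_is_collider {V : Type} (E : V → V → Prop) (hE : Acyclic E)
    (S : Set V) (a b v : V)
    (hab : a ≠ b) (hbv : b ≠ v) (hav : a ≠ v)
    (ha : a ∉ S) (hb : b ∉ S) (hv : v ∉ S)
    (hsep : (ofDAG E).DSep S a v)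
    (p : (ofDAG E).Walk a b) (hp : p.IsPath) (hpc : p.DConnecting S)
    (q : (ofDAG E).Walk b v) (hq : q.IsPath) (hqc : q.DConnecting S) :
    p.lastHead = some true ∧ q.firstHead = some true ∧
    ¬ ∃ s ∈ S, Relation.ReflTransGen E b s := by
  have hcon : ¬ (p.append q).DConnecting S := by
    intro h
    exact hsep (toPath (p.append q).length (p.append q) le_rfl h hE)
  obtain ⟨hL, hLe⟩ : ∃ hL, p.lastHead = some hL := by
    cases p with
    | nil => exact absurd rfl hab
    | cons hu hv e p' => exact ⟨_, MixedGraph.Walk.lastHead_cons _ _ _ _⟩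
  obtain ⟨h1, h1e⟩ : ∃ h1, q.firstHead = some h1 := by
    cases q with
    | nil => exact absurd rfl hbv
    | cons hu hv e q' => exact ⟨_, rfl⟩
  have build : ((hL = true ∧ h1 = true) → ∃ s ∈ S, Relation.ReflTransGen E b s) →
      (p.append q).DConnecting S := by
    intro hj m hm
    rcases MixedGraph.Walk.mem_append_elim hm with h | h | ⟨hL', h1', hLe', h1e', rfl⟩
    · exact hpc m h
    · exact hqc m h
    · have e1 : hL' = hL := by rw [hLe] at hLe'; exact (Option.some.inj hLe').symm
      have e2 : h1' = h1 := by rw [h1e] at h1e'; exact (Option.some.inj h1e').symm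
      subst e1; subst e2
      exact ⟨fun hc => hj hc, fun _ => hb⟩
  by_cases hanc : ∃ s ∈ S, Relation.ReflTransGen E b s
  · exact absurd (build fun _ => hanc) hcon
  · by_cases hcol : hL = true ∧ h1 = true
    · rw [hLe, h1e, hcol.1, hcol.2]
      exact ⟨rfl, rfl, hanc⟩
    · exact absurd (build fun hc => absurd hc hcol) hcon
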